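/- arXiv:1901.03633 — 3 statements merged into one kernel-verified Lean document; each statement's English description precedes it below -/
import Mathlib

section
/- Let C be a d-circuit and τ a tuple in the relation of C. Then the proof-tree of τ is connected (every included gate is reachable from the output along included gates) and every gate of the proof-tree has out-degree at most 1 within the proof-tree. -/
open Finset

/-- Labels of gates in a `{∪,×}`-circuit: inputs `x/d`, union gates, product gates. -/
inductive GLabel (X D : Type) where
  | inp (x : X) (d : D)
  | union
  | prod

/-- Restriction of a (partial) tuple to a set of attributes. -/
def restrictTup {X D : Type} [DecidableEq X] (τ : X → Option D) (A : Finset X) :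
    X → Option D :=
  fun x => if x ∈ A then τ x else none

/-- A `{∪,×}`-circuit on attributes `X` and domain `D`: a finite DAG whose leaves are
labeled by singleton relations `x/d`, internal gates by `∪` or `×` (with the syntactic
restrictions on attribute sets), together with its semantics `rel`. -/
structure Circuit (X D : Type) [Fintype X] [Fintype D] [DecidableEq X] [DecidableEq D] where
  Gate : Type
  fg : Fintype Gate
  dg : DecidableEq Gate
  children : Gate → Finset Gate
  label : Gate → GLabel X D
  output : Gate
  attrs : Gate → Finset X
  rel : Gate → Finset (X → Option D)
  depth : Gate → ℕ
  depth_lt : ∀ u, ∀ c ∈ children u, depth c < depth u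
  inp_no_children : ∀ u x d, label u = .inp x d → children u = ∅
  internal_children_nonempty :
    ∀ u, (label u = .union ∨ label u = .prod) → (children u).Nonempty
  attrs_inp : ∀ u x d, label u = .inp x d → attrs u = {x}
  attrs_internal :
    ∀ u, (label u = .union ∨ label u = .prod) → attrs u = (children u).biUnion attrs
  union_attrs : ∀ u, label u = .union → ∀ c ∈ children u, attrs c = attrs u
  prod_attrs : ∀ u, label u = .prod →
    ∀ c₁ ∈ children u, ∀ c₂ ∈ children u, c₁ ≠ c₂ → Disjoint (attrs c₁) (attrs c₂)
  rel_support : ∀ u, ∀ τ ∈ rel u, ∀ x, (τ x).isSome ↔ x ∈ attrs u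
  rel_inp : ∀ u x d, label u = .inp x d →
    ∀ τ, τ ∈ rel u ↔ τ = (fun y => if y = x then some d else none)
  rel_union : ∀ u, label u = .union → ∀ τ, τ ∈ rel u ↔ ∃ c ∈ children u, τ ∈ rel c
  rel_prod : ∀ u, label u = .prod →
    ∀ τ, τ ∈ rel u ↔ ((∀ x, (τ x).isSome ↔ x ∈ attrs u) ∧
      ∀ c ∈ children u, restrictTup τ (attrs c) ∈ rel c)

attribute [instance] Circuit.fg Circuit.dg

namespace Circuit

variable {X D : Type} [Fintype X] [Fintype D] [DecidableEq X] [DecidableEq D]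

/-- A d-circuit: every `∪`-gate is disjoint (its children define pairwise
disjoint relations). -/
def DisjointUnions (C : Circuit X D) : Prop :=
  ∀ u, C.label u = .union → ∀ c₁ ∈ C.children u, ∀ c₂ ∈ C.children u,
    c₁ ≠ c₂ → Disjoint (C.rel c₁) (C.rel c₂)

/-- The gates of the proof-tree of a tuple `τ`: the output gate is in, and a child `u`
of an included gate `v` is included iff the restriction of `τ` to the attributes of
the subcircuit rooted at `u` belongs to the relation of `u`. -/
inductive InPT (C : Circuit X D) (τ : X → Option D) : C.Gate → Prop
  | out : InPT C τ C.output
  | step {u v : C.Gate} : InPT C τ v → u ∈ C.children v →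
      restrictTup τ (C.attrs u) ∈ C.rel u → InPT C τ u

/-- An edge `e = (u, v)` (from child `u` to parent `v`) belongs to the proof-tree
of `τ`. -/
def EdgeInPT (C : Circuit X D) (τ : X → Option D) (e : C.Gate × C.Gate) : Prop :=
  C.InPT τ e.2 ∧ e.1 ∈ C.children e.2 ∧ restrictTup τ (C.attrs e.1) ∈ C.rel e.1

/-- The edges of the circuit, directed from child to parent. -/
def edges (C : Circuit X D) : Finset (C.Gate × C.Gate) :=
  Finset.univ.filter (fun e => e.1 ∈ C.children e.2)

/-- Outgoing edges of a gate `u` (towards its parents). -/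
def outEdges (C : Circuit X D) (u : C.Gate) : Finset (C.Gate × C.Gate) :=
  C.edges.filter (fun e => e.1 = u)

/-- Ingoing edges of a gate `u` (from its children). -/
def inEdges (C : Circuit X D) (u : C.Gate) : Finset (C.Gate × C.Gate) :=
  C.edges.filter (fun e => e.2 = u)

open Classical in
/-- `R(e)`: the set of tuples of `R(C)` whose proof-tree contains the edge `e`. -/
noncomputable def relEdge (C : Circuit X D) (e : C.Gate × C.Gate) :
    Finset (X → Option D) :=
  (C.rel C.output).filter (fun τ => C.EdgeInPT τ e)

/-- Soundness of an edge-weighting: flow conservation at non-output `∪`-gates, and at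
`×`-gates all ingoing edges carry the same weight, which (for non-output gates)
equals the sum of the outgoing weights. -/
def Sound (C : Circuit X D) (W : C.Gate × C.Gate → ℝ) : Prop :=
  (∀ u, C.label u = .union → u ≠ C.output →
      ∑ i ∈ C.inEdges u, W i = ∑ o ∈ C.outEdges u, W o) ∧
  (∀ u, C.label u = .prod →
      (∀ i ∈ C.inEdges u, ∀ i' ∈ C.inEdges u, W i = W i') ∧
      (u ≠ C.output → ∀ i ∈ C.inEdges u, W i = ∑ o ∈ C.outEdges u, W o))

end Circuit

/-- Reachability from the output along gates included in the proof-tree of `τ`. -/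
inductive Circuit.ReachPT {X D : Type} [Fintype X] [Fintype D]
    [DecidableEq X] [DecidableEq D]
    (C : Circuit X D) (τ : X → Option D) : C.Gate → Prop
  | out : C.InPT τ C.output → Circuit.ReachPT C τ C.output
  | step {u v : C.Gate} : Circuit.ReachPT C τ v → u ∈ C.children v →
      C.InPT τ u → Circuit.ReachPT C τ u

/-!
Every gate of the proof-tree is reached from the output by a path of kept edges. Of two gates of
the proof-tree, either one lies below the other along kept edges or their attribute sets are
disjoint: where the paths to them split, the gate is a `∪`-gate, which keeps at most one child because its children have equal
attributes and disjoint relations, or a `×`-gate, whose children have disjoint attributes. A gate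
`u` with two kept parents `v₁ ≠ v₂` therefore has one parent, say `v₁`, above the other; the path
from `v₁` to `v₂` leaves `v₁` through a child other than `u` (by depth), and that child is
attribute-disjoint from `u` while containing the nonempty attribute set of `u`.
-/

namespace Circuit

open Relation

variable {X D : Type} [Fintype X] [Fintype D] [DecidableEq X] [DecidableEq D]
  {C : Circuit X D} {τ : X → Option D}

lemma InPT.reachPT {u : C.Gate} (h : C.InPT τ u) : C.ReachPT τ u := by
  induction h with
  | out => exact .out .out
  | step hv hc hr ih => exact .step ih hc (.step hv hc hr)

lemma label_of_mem_children {u v : C.Gate} (h : u ∈ C.children v) :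
    C.label v = .union ∨ C.label v = .prod := by
  rcases hl : C.label v with ⟨x, d⟩ | _ | _
  · simp [C.inp_no_children v x d hl] at h
  · exact .inl rfl
  · exact .inr rfl

lemma attrs_subset_of_mem_children {u v : C.Gate} (h : u ∈ C.children v) :
    C.attrs u ⊆ C.attrs v := by
  rw [C.attrs_internal v (label_of_mem_children h)]
  exact subset_biUnion_of_mem _ h

theorem attrs_nonempty (C : Circuit X D) (u : C.Gate) : (C.attrs u).Nonempty := by
  by_cases hint : C.label u = .union ∨ C.label u = .prod
  · obtain ⟨c, hc⟩ := C.internal_children_nonempty u hint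
    exact (attrs_nonempty C c).mono (attrs_subset_of_mem_children hc)
  · obtain ⟨x, d, hl⟩ : ∃ x d, C.label u = .inp x d := by
      rcases hl : C.label u with ⟨x, d⟩ | _ | _ <;> simp_all
    simp [C.attrs_inp u x d hl]
termination_by C.depth u
decreasing_by exact C.depth_lt u c hc

lemma not_disjoint_of_attrs_subset {u : C.Gate} {s t : Finset X} (hs : C.attrs u ⊆ s)
    (ht : C.attrs u ⊆ t) : ¬Disjoint s t := fun h =>
  (C.attrs_nonempty u).ne_empty (disjoint_self.mp (h.mono hs ht))

variable (C τ) in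
/-- The edge from `v` down to its child `u` belongs to the proof-tree of `τ` as soon as `v` does. -/
def PTChild (v u : C.Gate) : Prop :=
  u ∈ C.children v ∧ restrictTup τ (C.attrs u) ∈ C.rel u

lemma InPT.reflTransGen {u : C.Gate} (h : C.InPT τ u) :
    ReflTransGen (C.PTChild τ) C.output u := by
  induction h with
  | out => exact .refl
  | step _ hc hr ih => exact ih.tail ⟨hc, hr⟩

lemma depth_le_of_reflTransGen {a b : C.Gate} (h : ReflTransGen (C.PTChild τ) a b) :
    C.depth b ≤ C.depth a := by
  induction h with
  | refl => exact le_rfl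
  | tail _ hc ih => exact (C.depth_lt _ _ hc.1).le.trans ih

lemma attrs_subset_of_reflTransGen {a b : C.Gate} (h : ReflTransGen (C.PTChild τ) a b) :
    C.attrs b ⊆ C.attrs a := by
  induction h with
  | refl => exact subset_rfl
  | tail _ hc ih => exact (attrs_subset_of_mem_children hc.1).trans ih

lemma PTChild.eq_or_disjoint (hd : C.DisjointUnions) {v c₁ c₂ : C.Gate}
    (h₁ : C.PTChild τ v c₁) (h₂ : C.PTChild τ v c₂) :
    c₁ = c₂ ∨ Disjoint (C.attrs c₁) (C.attrs c₂) := by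
  by_cases hne : c₁ = c₂
  · exact .inl hne
  right
  rcases label_of_mem_children h₁.1 with hl | hl
  · have hattrs : C.attrs c₁ = C.attrs c₂ := by
      rw [C.union_attrs v hl c₁ h₁.1, C.union_attrs v hl c₂ h₂.1]
    have hrel := hd v hl c₁ h₁.1 c₂ h₂.1 hne
    exact absurd h₂.2 (disjoint_left.mp hrel (hattrs ▸ h₁.2))
  · exact C.prod_attrs v hl c₁ h₁.1 c₂ h₂.1 hne

theorem reflTransGen_or_reflTransGen_or_disjoint (hd : C.DisjointUnions) {a b : C.Gate}
    (ha : C.InPT τ a) (hb : C.InPT τ b) :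
    ReflTransGen (C.PTChild τ) a b ∨ ReflTransGen (C.PTChild τ) b a ∨
      Disjoint (C.attrs a) (C.attrs b) := by
  induction hb with
  | out => exact .inr (.inl ha.reflTransGen)
  | @step b p _ hc hr ih =>
    have hpb : C.PTChild τ p b := ⟨hc, hr⟩
    rcases ih with hap | hpa | hdis
    · exact .inl (hap.tail hpb)
    · rcases hpa.cases_head with rfl | ⟨c, hpc, hca⟩
      · exact .inl (.single hpb)
      rcases hpc.eq_or_disjoint hd hpb with rfl | hcb
      · exact .inr (.inl hca)
      · exact .inr (.inr (hcb.mono_left (attrs_subset_of_reflTransGen hca)))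
    · exact .inr (.inr (hdis.mono_right (attrs_subset_of_mem_children hc)))

lemma eq_of_reflTransGen_of_PTChild (hd : C.DisjointUnions) {a b u : C.Gate}
    (hab : ReflTransGen (C.PTChild τ) a b) (hau : C.PTChild τ a u) (hbu : C.PTChild τ b u) :
    a = b := by
  rcases hab.cases_head with rfl | ⟨c, hac, hcb⟩
  · rfl
  rcases hac.eq_or_disjoint hd hau with rfl | hcu
  · exact absurd (depth_le_of_reflTransGen hcb) (C.depth_lt b c hbu.1).not_ge
  · exact absurd hcu (not_disjoint_of_attrs_subset
      ((attrs_subset_of_mem_children hbu.1).trans (attrs_subset_of_reflTransGen hcb)) subset_rfl)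

end Circuit

open Circuit in
theorem prooftree_connected_outdegree_le_one_general {X D : Type} [Fintype X] [Fintype D]
    [DecidableEq X] [DecidableEq D]
    (C : Circuit X D) (hd : C.DisjointUnions)
    (τ : X → Option D) :
    (∀ u : C.Gate, C.InPT τ u → C.ReachPT τ u) ∧
    (∀ u v₁ v₂ : C.Gate, C.EdgeInPT τ (u, v₁) → C.EdgeInPT τ (u, v₂) → v₁ = v₂) := by
  refine ⟨fun u hu => hu.reachPT, ?_⟩
  rintro u v₁ v₂ ⟨hv₁, hu₁⟩ ⟨hv₂, hu₂⟩
  rcases reflTransGen_or_reflTransGen_or_disjoint hd hv₁ hv₂ with h₁₂ | h₂₁ | hdis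
  · exact eq_of_reflTransGen_of_PTChild hd h₁₂ hu₁ hu₂
  · exact (eq_of_reflTransGen_of_PTChild hd h₂₁ hu₂ hu₁).symm
  · exact absurd hdis (not_disjoint_of_attrs_subset
      (attrs_subset_of_mem_children hu₁.1) (attrs_subset_of_mem_children hu₂.1))

/-- The proof-tree of a tuple is connected (every included gate is reachable from the
output along included gates) and every gate has out-degree at most 1 within the
proof-tree. -/
theorem prooftree_connected_outdegree_le_one {X D : Type} [Fintype X] [Fintype D]
    [DecidableEq X] [DecidableEq D]
    (C : Circuit X D) (hd : C.DisjointUnions)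
    (τ : X → Option D) (hτ : τ ∈ C.rel C.output) :
    (∀ u : C.Gate, C.InPT τ u → C.ReachPT τ u) ∧
    (∀ u v₁ v₂ : C.Gate, C.EdgeInPT τ (u, v₁) → C.EdgeInPT τ (u, v₂) → v₁ = v₂) :=
  prooftree_connected_outdegree_le_one_general C hd τ
end

section
/- Let C be a d-circuit on attributes X, and assume for each attribute x and domain element d there is at most one input labeled x/d. Then for every tuple τ in the relation of C and every attribute x ∈ X, the proof-tree of τ contains exactly one input, and that input is labeled x/τ(x). -/
open Finset

/-!
Every gate `u` of the proof-tree of `τ` has the restriction of `τ` to its attributes in its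
relation. Following an attribute `x` downwards from the output (at a `∪`-gate to a child whose
relation witnesses the membership, at a `×`-gate to the child whose attributes contain `x`)
therefore stays inside the proof-tree and ends at an input gate on `x`. Such an input can only be
labeled `x/τ(x)`, and by assumption at most one input carries that label.
-/

theorem restrictTup_restrictTup_of_subset {X D : Type} [DecidableEq X] (τ : X → Option D)
    {A B : Finset X} (hBA : B ⊆ A) :
    restrictTup (restrictTup τ A) B = restrictTup τ B := by
  funext y
  by_cases hy : y ∈ B
  · simp [restrictTup, hy, hBA hy]
  · simp [restrictTup, hy]

theorem restrictTup_univ {X D : Type} [Fintype X] [DecidableEq X] (τ : X → Option D) :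
    restrictTup τ univ = τ := by
  funext y
  simp [restrictTup]

namespace Circuit

variable {X D : Type} [Fintype X] [Fintype D] [DecidableEq X] [DecidableEq D]
  {C : Circuit X D} {τ : X → Option D}

theorem InPT.restrictTup_mem_rel
    (hτ : restrictTup τ (C.attrs C.output) ∈ C.rel C.output) {u : C.Gate}
    (hu : C.InPT τ u) : restrictTup τ (C.attrs u) ∈ C.rel u := by
  cases hu with
  | out => exact hτ
  | step _ _ h => exact h

theorem apply_eq_of_restrictTup_mem_rel_inp {u : C.Gate} {x : X} {d : D}
    (hl : C.label u = .inp x d) (hu : restrictTup τ (C.attrs u) ∈ C.rel u) :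
    τ x = some d := by
  rw [C.attrs_inp u x d hl, C.rel_inp u x d hl] at hu
  simpa [restrictTup] using congrFun hu x

theorem exists_child_mem_attrs_restrictTup_mem_rel {u : C.Gate} {x : X}
    (hl : C.label u = .union ∨ C.label u = .prod)
    (hu : restrictTup τ (C.attrs u) ∈ C.rel u) (hx : x ∈ C.attrs u) :
    ∃ c ∈ C.children u, x ∈ C.attrs c ∧ restrictTup τ (C.attrs c) ∈ C.rel c := by
  rcases hl with hl | hl
  · obtain ⟨c, hc, hcrel⟩ := (C.rel_union u hl _).1 hu
    have hca := C.union_attrs u hl c hc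
    exact ⟨c, hc, hca ▸ hx, hca ▸ hcrel⟩
  · have hattrs := C.attrs_internal u (Or.inr hl)
    obtain ⟨c, hc, hxc⟩ := mem_biUnion.1 (hattrs ▸ hx)
    have hsub : C.attrs c ⊆ C.attrs u := hattrs ▸ subset_biUnion_of_mem C.attrs hc
    have hcrel := ((C.rel_prod u hl _).1 hu).2 c hc
    rw [restrictTup_restrictTup_of_subset τ hsub] at hcrel
    exact ⟨c, hc, hxc, hcrel⟩

theorem InPT.exists_inPT_inp
    (hτ : restrictTup τ (C.attrs C.output) ∈ C.rel C.output) {u : C.Gate} {x : X}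
    (hu : C.InPT τ u) (hx : x ∈ C.attrs u) :
    ∃ w, C.InPT τ w ∧ ∃ d, C.label w = .inp x d := by
  cases hl : C.label u with
  | inp y d =>
    rw [C.attrs_inp u y d hl, mem_singleton] at hx
    exact ⟨u, hu, d, hx ▸ hl⟩
  | union | prod =>
    obtain ⟨c, hc, hxc, hcrel⟩ :=
      exists_child_mem_attrs_restrictTup_mem_rel (by simp [hl]) (hu.restrictTup_mem_rel hτ) hx
    have hdepth : C.depth c < C.depth u := C.depth_lt u c hc
    exact (hu.step hc hcrel).exists_inPT_inp hτ hxc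
termination_by C.depth u

end Circuit

theorem prooftree_unique_input_general {X D : Type} [Fintype X] [Fintype D]
    [DecidableEq X] [DecidableEq D]
    (C : Circuit X D)
    (huniq : ∀ (u₁ u₂ : C.Gate) (x : X) (d : D),
      C.label u₁ = GLabel.inp x d → C.label u₂ = GLabel.inp x d → u₁ = u₂)
    (hattrs : C.attrs C.output = Finset.univ)
    (τ : X → Option D) (hτ : τ ∈ C.rel C.output) (x : X) (d : D) (hx : τ x = some d) :
    (∃! u : C.Gate, C.InPT τ u ∧ ∃ d', C.label u = GLabel.inp x d') ∧
    (∀ (u : C.Gate) (d' : D), C.InPT τ u → C.label u = GLabel.inp x d' → d' = d) := by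
  have hτ' : restrictTup τ (C.attrs C.output) ∈ C.rel C.output := by
    rwa [hattrs, restrictTup_univ]
  have hval : ∀ (u : C.Gate) (d' : D), C.InPT τ u → C.label u = .inp x d' → d' = d :=
    fun u d' hu hl => Option.some_injective _ <|
      (Circuit.apply_eq_of_restrictTup_mem_rel_inp hl (hu.restrictTup_mem_rel hτ')).symm.trans hx
  obtain ⟨w, hw, d', hlw⟩ :=
    Circuit.InPT.out.exists_inPT_inp hτ' (hattrs ▸ Finset.mem_univ x)
  refine ⟨⟨w, ⟨hw, d', hlw⟩, ?_⟩, hval⟩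
  rintro u ⟨hu, d'', hlu⟩
  exact huniq u w x d (hval u d'' hu hlu ▸ hlu) (hval w d' hw hlw ▸ hlw)

/-- In a d-circuit with at most one input per label `x/d` and whose output gate has all
attributes, for every tuple `τ` in the relation and every attribute `x`, the
proof-tree of `τ` contains exactly one input on attribute `x`, and its label is
`x/τ(x)`. -/
theorem prooftree_unique_input {X D : Type} [Fintype X] [Fintype D]
    [DecidableEq X] [DecidableEq D]
    (C : Circuit X D) (hd : C.DisjointUnions)
    (huniq : ∀ (u₁ u₂ : C.Gate) (x : X) (d : D),
      C.label u₁ = GLabel.inp x d → C.label u₂ = GLabel.inp x d → u₁ = u₂)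
    (hattrs : C.attrs C.output = Finset.univ)
    (τ : X → Option D) (hτ : τ ∈ C.rel C.output) (x : X) (d : D) (hx : τ x = some d) :
    (∃! u : C.Gate, C.InPT τ u ∧ ∃ d', C.label u = GLabel.inp x d') ∧
    (∀ (u : C.Gate) (d' : D), C.InPT τ u → C.label u = GLabel.inp x d' → d' = d) :=
  prooftree_unique_input_general C huniq hattrs τ hτ x d hx
end

section
/- Let X be a finite attribute set, D a finite domain, Z ⊆ X, R ⊆ D^X nonempty and finite, and ω' : ∃Z.R → ℝ₊. Define ω : R → ℝ₊ by ω(τ) := ω'(τ|_{X\Z}) / |Ext(τ|_{X\Z})|. Then for every x ∈ X \ Z and d ∈ D, Σ_{τ ∈ R, τ(x)=d} ω(τ) = Σ_{τ' ∈ ∃Z.R, τ'(x)=d} ω'(τ'). -/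
open Finset

/-- The projection of a tuple `τ : X → D` onto the attributes outside `Z`. -/
def projTup {X D : Type} [Fintype X] [DecidableEq X] (Z : Finset X) (τ : X → D) :
    {x : X // x ∈ Zᶜ} → D :=
  fun y => τ y.1

section FiberwiseSplitting

variable {α β K : Type*} [DecidableEq β] [Semifield K] [CharZero K]

theorem Finset.sum_div_card_fiber_eq_sum_image (s : Finset α) (f : α → β) (w : β → K) :
    ∑ a ∈ s, w (f a) / #{b ∈ s | f b = f a} = ∑ b ∈ s.image f, w b := by
  refine (sum_image' _ fun a ha => ?_).symm
  have hcard : (#{b ∈ s | f b = f a} : K) ≠ 0 :=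
    Nat.cast_ne_zero.mpr (card_ne_zero_of_mem (mem_filter.mpr ⟨ha, rfl⟩))
  rw [sum_congr rfl fun b hb => by rw [(mem_filter.mp hb).2], sum_const, nsmul_eq_mul,
    mul_div_cancel₀ _ hcard]

theorem Finset.sum_filter_div_card_fiber_eq_sum_filter_image (s : Finset α) (f : α → β)
    (w : β → K) (p : β → Prop) [DecidablePred p] :
    ∑ a ∈ s with p (f a), w (f a) / #{b ∈ s | f b = f a}
      = ∑ b ∈ s.image f with p b, w b := by
  rw [filter_image, ← sum_div_card_fiber_eq_sum_image]
  refine sum_congr rfl fun a ha => ?_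
  -- a fiber of `f` never leaves the part of `s` where `p ∘ f` holds
  rw [filter_filter, filter_congr fun b _ => and_iff_right_of_imp fun (hb : f b = f a) =>
    hb ▸ (mem_filter.mp ha).2]

end FiberwiseSplitting

theorem lift_weighting_preserves_sums_general {X D : Type} [Fintype X]
    [DecidableEq X] [DecidableEq D]
    (Z : Finset X) (R : Finset (X → D))
    (ω' : ({x : X // x ∈ Zᶜ} → D) → ℝ)
    (ω : (X → D) → ℝ)
    (hω : ∀ τ, ω τ = ω' (projTup Z τ)
      / (R.filter (fun σ => projTup Z σ = projTup Z τ)).card) :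
    ∀ (x : {x : X // x ∈ Zᶜ}) (d : D),
      (∑ τ ∈ R.filter (fun τ => τ x.1 = d), ω τ)
        = ∑ τ' ∈ (R.image (projTup Z)).filter (fun τ' => τ' x = d), ω' τ' := by
  intro x d
  simp_rw [hω]
  exact sum_filter_div_card_fiber_eq_sum_filter_image R (projTup Z) ω' (fun τ' => τ' x = d)

/-- Pulling a tuple-weighting `ω'` of `∃Z.R` back to `R` by splitting the weight of
each projected tuple evenly among its extensions: defining
`ω(τ) := ω'(τ|_{X∖Z}) / |Ext(τ|_{X∖Z})|`, the CAS sums are preserved: for every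
attribute `x ∉ Z` and `d ∈ D`,
`Σ_{τ ∈ R, τ(x)=d} ω(τ) = Σ_{τ' ∈ ∃Z.R, τ'(x)=d} ω'(τ')`. -/
theorem lift_weighting_preserves_sums {X D : Type} [Fintype X] [Fintype D]
    [DecidableEq X] [DecidableEq D]
    (Z : Finset X) (R : Finset (X → D)) (hR : R.Nonempty)
    (ω' : ({x : X // x ∈ Zᶜ} → D) → ℝ)
    (hω' : ∀ τ' ∈ R.image (projTup Z), 0 ≤ ω' τ')
    (ω : (X → D) → ℝ)
    (hω : ∀ τ, ω τ = ω' (projTup Z τ)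
      / (R.filter (fun σ => projTup Z σ = projTup Z τ)).card) :
    ∀ (x : {x : X // x ∈ Zᶜ}) (d : D),
      (∑ τ ∈ R.filter (fun τ => τ x.1 = d), ω τ)
        = ∑ τ' ∈ (R.image (projTup Z)).filter (fun τ' => τ' x = d), ω' τ' :=
  lift_weighting_preserves_sums_general Z R ω' ω hω
end
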